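/- (Classical limit of the Pieri coefficients.) Let η be a composition, I = {t_1 < ⋯ < t_s} a subset maximal with respect to η, and α > 0 a real number. For real q ∈ (0,1) put t := q^{1/α} and define the real number a_{η,c_I(η)}(q) := −(q−1) d'_η(q^{−1},t^{−1}) A_I(η̄(q)) B̃_I(η̄(q)) / (q^{η_{t_1}+1} (t−1) d'_{c_I(η)}(q^{−1},t^{−1})), where η̄(q)_i := q^{η_i} t^{−l'_η(i)}. Let u_i := η_i − l'_η(i)/α, a(x,y) := 1/(α(x−y)), b(x,y) := (x−y−1/α)/(x−y), A_{α,I}(u) := a(u_{t_s}−1, u_{t_1}) ∏_{v=1}^{s−1} a(u_{t_v}, u_{t_{v+1}}), B̃_{α,I}(u) := (u_{t_1}+1+(n−1)/α) ∏_{v=1}^{s} ∏_{j=t_{v−1}+1}^{t_v−1} b(u_{t_v}, u_j) ∏_{j=t_s+1}^{n} b(u_{t_1}+1, u_j) (with t_0 := 0), and d'_{α,μ} := ∏_{s' ∈ diag(μ)} (α(a_μ(s')+1) + l_μ(s')). Then lim_{q→1⁻} a_{η,c_I(η)}(q) = −α² d'_{α,η} A_{α,I}(u) B̃_{α,I}(u)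 / d'_{α,c_I(η)}. -/

import Mathlib

open scoped BigOperators Classical

noncomputable section

/-- A composition with (at most) `n` parts: nonzero entries only in positions `1,…,n`. -/
def IsComp (n : ℕ) (η : ℕ → ℕ) : Prop := ∀ j, η j ≠ 0 → j ∈ Finset.Icc 1 n

/-- `l'_η(i) = #{j<i : η_j ≥ η_i} + #{j>i : η_j > η_i}`. -/
def lprime (n : ℕ) (η : ℕ → ℕ) (i : ℕ) : ℕ :=
  ((Finset.Icc 1 n).filter fun j => j < i ∧ η i ≤ η j).card +
  ((Finset.Icc 1 n).filter fun j => i < j ∧ η i < η j).card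

/-- The least element `t_1` of a finite set `I`. -/
def fmin (I : Finset ℕ) : ℕ := if h : I.Nonempty then I.min' h else 0

/-- The greatest element `t_s` of a finite set `I`. -/
def fmax (I : Finset ℕ) : ℕ := if h : I.Nonempty then I.max' h else 0

/-- The least element of `I` greater than `j`. -/
def succI (I : Finset ℕ) (j : ℕ) : ℕ := fmin (I.filter (fun k => j < k))

/-- `I` is maximal with respect to `η`. -/
def MaximalI (n : ℕ) (I : Finset ℕ) (η : ℕ → ℕ) : Prop :=
  (∀ j ∈ Finset.Icc 1 n, j ∉ I → j < fmax I → η j ≠ η (succI I j)) ∧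
  (∀ j ∈ Finset.Icc 1 n, fmax I < j → η j ≠ η (fmin I) + 1)

/-- The composition `c_I(η)`. -/
def cIfun (I : Finset ℕ) (η : ℕ → ℕ) : ℕ → ℕ := fun j =>
  if j = fmax I then η (fmin I) + 1
  else if j ∈ I then η (succI I j)
  else η j

/-- The arm length `a_η(i,j) = η_i - j`. -/
def armF (η : ℕ → ℕ) (i j : ℕ) : ℕ := η i - j

/-- The leg length `l_η(i,j)`. -/
def legF (n : ℕ) (η : ℕ → ℕ) (i j : ℕ) : ℕ :=
  ((Finset.Icc 1 n).filter fun k => i < k ∧ j ≤ η k ∧ η k ≤ η i).card +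
  ((Finset.Icc 1 n).filter fun k => k < i ∧ j ≤ η k + 1 ∧ η k + 1 ≤ η i).card

/-- The real spectral vector `η̄(q)` for parameters `qr, tr`: `η̄_i = qr^{η_i} tr^{-l'_η(i)}`. -/
def specR (qr tr : ℝ) (n : ℕ) (η : ℕ → ℕ) : ℕ → ℝ := fun i =>
  qr ^ (η i) * tr ^ (-(lprime n η i : ℤ))

/-- `â(x,y) = (t-1)x/(x-y)` over `ℝ`. -/
def ahatR (tr x y : ℝ) : ℝ := (tr - 1) * x / (x - y)

/-- `b̂(x,y) = (x-ty)/(x-y)` over `ℝ`. -/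
def bhatR (tr x y : ℝ) : ℝ := (x - tr * y) / (x - y)

/-- `A_I(z)` over `ℝ`. -/
def AIR (qr tr : ℝ) (I : Finset ℕ) (z : ℕ → ℝ) : ℝ :=
  ahatR tr (z (fmax I) / qr) (z (fmin I)) *
    (((I.sort (· ≤ ·)).zip (I.sort (· ≤ ·)).tail).map (fun p => ahatR tr (z p.1) (z p.2))).prod

/-- `B̃_I(z)` over `ℝ`. -/
def BtildeIR (qr tr : ℝ) (n : ℕ) (I : Finset ℕ) (z : ℕ → ℝ) : ℝ :=
  (qr * z (fmin I) - tr ^ (1 - (n:ℤ))) *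
    (∏ j ∈ (Finset.Icc 1 n).filter (fun j => j ∉ I ∧ j < fmax I), bhatR tr (z (succI I j)) (z j)) *
    (∏ j ∈ (Finset.Icc 1 n).filter (fun j => fmax I < j), bhatR tr (qr * z (fmin I)) (z j))

/-- `d'_η(q⁻¹,t⁻¹)` over `ℝ`. -/
def dprimeInvR (qr tr : ℝ) (n : ℕ) (η : ℕ → ℕ) : ℝ :=
  ∏ i ∈ Finset.Icc 1 n, ∏ j ∈ Finset.Icc 1 (η i),
    (1 - qr ^ (-(armF η i j + 1 : ℤ)) * tr ^ (-(legF n η i j : ℤ)))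

/-- The vector `u_i = η_i - l'_η(i)/α` of the Jack theory. -/
def uvec (α : ℝ) (n : ℕ) (η : ℕ → ℕ) : ℕ → ℝ := fun i =>
  (η i : ℝ) - (lprime n η i : ℝ) / α

/-- `a(x,y) = 1/(α(x-y))`. -/
def aJ (α x y : ℝ) : ℝ := 1 / (α * (x - y))

/-- `b(x,y) = (x-y-1/α)/(x-y)`. -/
def bJ (α x y : ℝ) : ℝ := (x - y - 1/α) / (x - y)

/-- `A_{α,I}(u) = a(u_{t_s}-1, u_{t_1}) ∏_{v=1}^{s-1} a(u_{t_v}, u_{t_{v+1}})`. -/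
def AJ (α : ℝ) (I : Finset ℕ) (u : ℕ → ℝ) : ℝ :=
  aJ α (u (fmax I) - 1) (u (fmin I)) *
    (((I.sort (· ≤ ·)).zip (I.sort (· ≤ ·)).tail).map (fun p => aJ α (u p.1) (u p.2))).prod

/-- `B̃_{α,I}(u)`. -/
def BtJ (α : ℝ) (n : ℕ) (I : Finset ℕ) (u : ℕ → ℝ) : ℝ :=
  (u (fmin I) + 1 + ((n : ℝ) - 1) / α) *
    (∏ j ∈ (Finset.Icc 1 n).filter (fun j => j ∉ I ∧ j < fmax I), bJ α (u (succI I j)) (u j)) *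
    (∏ j ∈ (Finset.Icc 1 n).filter (fun j => fmax I < j), bJ α (u (fmin I) + 1) (u j))

/-- `d'_{α,μ} = ∏_{s ∈ diag(μ)} (α(a_μ(s)+1) + l_μ(s))`. -/
def dJ (α : ℝ) (n : ℕ) (μ : ℕ → ℕ) : ℝ :=
  ∏ i ∈ Finset.Icc 1 n, ∏ j ∈ Finset.Icc 1 (μ i),
    (α * (armF μ i j + 1) + legF n μ i j)


/-! Substituting `t = q^{1/α}` makes every entry of `η̄(q)` a power `q^{u_i}`, and every factor
of the Pieri coefficient a ratio of differences `q^a - q^b = (a - b)(q - 1) + o(q - 1)`.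
Among these, `d'_η` has `|η|` vanishing factors, `d'_{c_I(η)}` has `|η| + 1` (the composition
`c_I(η)` has one box more), `B̃_I` and `t - 1` one each; with the explicit `q - 1` the orders
balance, so dividing each factor by its power of `q - 1` the limit can be taken factor by
factor. The limits of `â` and `b̂` exist because the entries of `u` are distinct and no later
entry exceeds an earlier one by exactly `1`. -/

open Filter
open scoped Topology

theorem tendsto_rpow_sub_rpow_div_sub_one (a b : ℝ) :
    Tendsto (fun q : ℝ => (q ^ a - q ^ b) / (q - 1)) (𝓝[≠] 1) (𝓝 (a - b)) := by
  have hderiv (c : ℝ) : HasDerivAt (fun q : ℝ => q ^ c) c 1 := by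
    simpa using Real.hasDerivAt_rpow_const (x := 1) (p := c) (Or.inl one_ne_zero)
  refine (hasDerivAt_iff_tendsto_slope.mp ((hderiv a).sub (hderiv b))).congr fun q => ?_
  simp [slope_def_field]

theorem eventually_pos_nhdsNE_one : ∀ᶠ q : ℝ in 𝓝[≠] 1, 0 < q :=
  eventually_nhdsWithin_of_eventually_nhds (lt_mem_nhds one_pos)

theorem tendsto_rpow_nhdsNE_one (a : ℝ) : Tendsto (fun q : ℝ => q ^ a) (𝓝[≠] 1) (𝓝 1) := by
  simpa using ((Real.continuousAt_rpow_const 1 a (Or.inl one_ne_zero)).tendsto).mono_left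
    nhdsWithin_le_nhds

theorem prod_diagram_div {M : Type*} [DivisionCommMonoid M] (s : Finset ℕ) (μ : ℕ → ℕ)
    (f : ℕ → ℕ → M) (c : M) :
    (∏ i ∈ s, ∏ j ∈ Finset.Icc 1 (μ i), f i j) / c ^ (∑ i ∈ s, μ i) =
      ∏ i ∈ s, ∏ j ∈ Finset.Icc 1 (μ i), f i j / c := by
  simp [Finset.prod_div_distrib, Finset.prod_pow_eq_pow_sum]

section Rpow

variable {α q : ℝ}

theorem specR_eq_rpow_uvec (hq : 0 < q) (n : ℕ) (η : ℕ → ℕ) :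
    specR q (q ^ (1 / α)) n η = fun i => q ^ uvec α n η i := by
  ext i
  rw [specR, uvec, ← Real.rpow_natCast, ← Real.rpow_intCast, ← Real.rpow_mul hq.le,
    ← Real.rpow_add hq]
  push_cast
  ring_nf

theorem zpow_rpow_one_div (hq : 0 < q) (m : ℤ) : (q ^ (1 / α)) ^ m = q ^ ((m : ℝ) / α) := by
  rw [← Real.rpow_intCast, ← Real.rpow_mul hq.le]
  ring_nf

end Rpow

theorem tendsto_ahatR_rpow {α a b : ℝ} (hab : a ≠ b) :
    Tendsto (fun q : ℝ => ahatR (q ^ (1 / α)) (q ^ a) (q ^ b)) (𝓝[≠] 1) (𝓝 (aJ α a b)) := by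
  have h := ((tendsto_rpow_sub_rpow_div_sub_one (1 / α) 0).mul (tendsto_rpow_nhdsNE_one a)).div
    (tendsto_rpow_sub_rpow_div_sub_one a b) (sub_ne_zero.mpr hab)
  rw [show (1 / α - 0) * 1 / (a - b) = aJ α a b by rw [aJ, sub_zero, mul_one, div_div]] at h
  refine h.congr' ?_
  filter_upwards [self_mem_nhdsWithin] with q hq
  have hq1 : q - 1 ≠ 0 := sub_ne_zero.mpr hq
  simp only [Pi.div_apply, ahatR, Real.rpow_zero]
  field_simp

theorem tendsto_bhatR_rpow {α a b : ℝ} (hab : a ≠ b) :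
    Tendsto (fun q : ℝ => bhatR (q ^ (1 / α)) (q ^ a) (q ^ b)) (𝓝[≠] 1) (𝓝 (bJ α a b)) := by
  have h := (tendsto_rpow_sub_rpow_div_sub_one a (1 / α + b)).div
    (tendsto_rpow_sub_rpow_div_sub_one a b) (sub_ne_zero.mpr hab)
  rw [show (a - (1 / α + b)) / (a - b) = bJ α a b by rw [bJ]; ring] at h
  refine h.congr' ?_
  filter_upwards [self_mem_nhdsWithin, eventually_pos_nhdsNE_one] with q hq hq0
  have hq1 : q - 1 ≠ 0 := sub_ne_zero.mpr hq
  simp only [Pi.div_apply, bhatR, Real.rpow_add hq0]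
  field_simp

theorem tendsto_dprimeInvR_div (α : ℝ) (hα : α ≠ 0) (n : ℕ) (μ : ℕ → ℕ) :
    Tendsto (fun q : ℝ => dprimeInvR q (q ^ (1 / α)) n μ / (q - 1) ^ (∑ i ∈ Finset.Icc 1 n, μ i))
      (𝓝[≠] 1) (𝓝 (dJ α n μ / α ^ (∑ i ∈ Finset.Icc 1 n, μ i))) := by
  simp only [dprimeInvR, dJ, prod_diagram_div]
  refine tendsto_finsetProd _ fun i _ => tendsto_finsetProd _ fun j _ => ?_
  have h := tendsto_rpow_sub_rpow_div_sub_one 0 (-((armF μ i j : ℝ) + 1 + legF n μ i j / α))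
  rw [show (0 : ℝ) - -((armF μ i j : ℝ) + 1 + legF n μ i j / α) =
    (α * (armF μ i j + 1) + legF n μ i j) / α by field_simp; ring] at h
  refine h.congr' ?_
  filter_upwards [eventually_pos_nhdsNE_one] with q hq0
  rw [zpow_rpow_one_div hq0, ← Real.rpow_intCast, ← Real.rpow_add hq0, Real.rpow_zero]
  push_cast
  ring_nf

theorem dJ_pos {α : ℝ} (hα : 0 < α) (n : ℕ) (μ : ℕ → ℕ) : 0 < dJ α n μ :=
  Finset.prod_pos fun _ _ => Finset.prod_pos fun _ _ => by positivity

theorem Finset.card_filter_lt_lt_of_lt {ι β : Type*} [Preorder β] [DecidableLT β]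
    (s : Finset ι) (κ : ι → β) {i j : ι} (hj : j ∈ s) (hij : κ i < κ j) :
    (s.filter fun k => κ j < κ k).card < (s.filter fun k => κ i < κ k).card := by
  refine Finset.card_lt_card ((Finset.ssubset_iff_of_subset ?_).mpr ⟨j, ?_, ?_⟩)
  · exact Finset.monotone_filter_right s fun k _ => hij.trans
  · exact Finset.mem_filter.mpr ⟨hj, hij⟩
  · simp

/-- Positions ordered by larger part first, ties broken by smaller index: `l'_η(i)` counts the
positions that come before `i` in this order. -/
def compKey (η : ℕ → ℕ) (j : ℕ) : ℕ ×ₗ ℕᵒᵈ := toLex (η j, OrderDual.toDual j)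

theorem lprime_eq_card_filter_compKey_lt (n : ℕ) (η : ℕ → ℕ) (i : ℕ) :
    lprime n η i = ((Finset.Icc 1 n).filter fun j => compKey η i < compKey η j).card := by
  rw [lprime, ← Finset.card_union_of_disjoint, ← Finset.filter_or]
  · congr 1
    ext j
    simp only [Finset.mem_filter, compKey, Prod.Lex.toLex_lt_toLex, OrderDual.toDual_lt_toDual]
    exact and_congr_right fun _ => by rcases lt_trichotomy j i with h | rfl | h <;> omega
  · exact Finset.disjoint_filter.mpr fun j _ h h' => by omega

theorem lprime_lt_of_compKey_lt {n : ℕ} {η : ℕ → ℕ} {i j : ℕ} (hj : j ∈ Finset.Icc 1 n)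
    (hij : compKey η i < compKey η j) : lprime n η j < lprime n η i := by
  simp only [lprime_eq_card_filter_compKey_lt]
  exact Finset.card_filter_lt_lt_of_lt _ _ hj hij

section Uvec

variable {α : ℝ} {n : ℕ} {η : ℕ → ℕ} {i j : ℕ}

theorem uvec_lt_or_add_one_lt (hα : 0 < α) (hi : i ∈ Finset.Icc 1 n) (hj : j ∈ Finset.Icc 1 n)
    (hij : i < j) : uvec α n η j < uvec α n η i ∨ uvec α n η i + 1 < uvec α n η j := by
  simp only [uvec]
  rcases le_or_gt (η j) (η i) with hle | hlt
  · have hkey : compKey η j < compKey η i := by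
      simp only [compKey, Prod.Lex.toLex_lt_toLex, OrderDual.toDual_lt_toDual]
      omega
    have hl : (lprime n η i : ℝ) < lprime n η j := by
      exact_mod_cast lprime_lt_of_compKey_lt hi hkey
    have hη : (η j : ℝ) ≤ η i := by exact_mod_cast hle
    left
    have := div_lt_div_of_pos_right hl hα
    linarith
  · have hkey : compKey η i < compKey η j := by
      simp only [compKey, Prod.Lex.toLex_lt_toLex]
      omega
    have hl : (lprime n η j : ℝ) + 1 ≤ lprime n η i := by
      exact_mod_cast lprime_lt_of_compKey_lt hj hkey
    have hη : (η i : ℝ) + 1 ≤ η j := by exact_mod_cast hlt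
    have hdiv : (lprime n η j : ℝ) / α + 1 / α ≤ lprime n η i / α := by
      rw [← add_div]
      exact div_le_div_of_nonneg_right hl hα.le
    have : 0 < 1 / α := by positivity
    right
    linarith

theorem uvec_ne_of_lt (hα : 0 < α) (hi : i ∈ Finset.Icc 1 n) (hj : j ∈ Finset.Icc 1 n)
    (hij : i < j) : uvec α n η i ≠ uvec α n η j := by
  rcases uvec_lt_or_add_one_lt hα hi hj hij with h | h <;> intro he <;> linarith

theorem uvec_add_one_ne_of_lt (hα : 0 < α) (hi : i ∈ Finset.Icc 1 n) (hj : j ∈ Finset.Icc 1 n)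
    (hij : i < j) : uvec α n η i + 1 ≠ uvec α n η j := by
  rcases uvec_lt_or_add_one_lt hα hi hj hij with h | h <;> intro he <;> linarith

end Uvec

/-- The two non-degeneracy conditions under which the `q → 1` limits of `â` and `b̂` at
`q ^ u` exist. -/
def SeparatedOn (s : Finset ℕ) (u : ℕ → ℝ) : Prop :=
  ∀ i ∈ s, ∀ j ∈ s, i < j → u i ≠ u j ∧ u i + 1 ≠ u j

theorem SeparatedOn.mono {s t : Finset ℕ} {u : ℕ → ℝ} (h : SeparatedOn t u) (hst : s ⊆ t) :
    SeparatedOn s u :=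
  fun i hi j hj hij => h i (hst hi) j (hst hj) hij

theorem separatedOn_uvec {α : ℝ} (hα : 0 < α) (n : ℕ) (η : ℕ → ℕ) :
    SeparatedOn (Finset.Icc 1 n) (uvec α n η) :=
  fun _ hi _ hj hij => ⟨uvec_ne_of_lt hα hi hj hij, uvec_add_one_ne_of_lt hα hi hj hij⟩

section CyclicShift

variable {I : Finset ℕ}

theorem fmin_mem (hne : I.Nonempty) : fmin I ∈ I := by
  rw [fmin, dif_pos hne]; exact I.min'_mem hne

theorem fmax_mem (hne : I.Nonempty) : fmax I ∈ I := by
  rw [fmax, dif_pos hne]; exact I.max'_mem hne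

theorem fmin_le {j : ℕ} (hj : j ∈ I) : fmin I ≤ j := by
  rw [fmin, dif_pos ⟨j, hj⟩]; exact I.min'_le j hj

theorem le_fmax {j : ℕ} (hj : j ∈ I) : j ≤ fmax I := by
  rw [fmax, dif_pos ⟨j, hj⟩]; exact I.le_max' j hj

theorem succI_mem_and_lt {j : ℕ} (hj : j < fmax I) : succI I j ∈ I ∧ j < succI I j := by
  have hne : I.Nonempty := by
    by_contra h
    simp [fmax, h] at hj
  exact Finset.mem_filter.mp (fmin_mem ⟨fmax I, Finset.mem_filter.mpr ⟨fmax_mem hne, hj⟩⟩)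

theorem succI_le {j k : ℕ} (hk : k ∈ I) (hjk : j < k) : succI I j ≤ k :=
  fmin_le (Finset.mem_filter.mpr ⟨hk, hjk⟩)

/-- The cyclic shift `t_k ↦ t_{k+1}`, `t_s ↦ t_1` of `I`, so that `c_I(η) = η ∘ cycI` on `I`
except for the extra box at `t_s`. -/
def cycI (I : Finset ℕ) (j : ℕ) : ℕ := if j = fmax I then fmin I else succI I j

theorem cycI_mem (hne : I.Nonempty) {j : ℕ} (hj : j ∈ I) : cycI I j ∈ I := by
  unfold cycI
  split_ifs with h
  · exact fmin_mem hne
  · exact (succI_mem_and_lt (lt_of_le_of_ne (le_fmax hj) h)).1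

theorem cycI_ne_of_lt {j k : ℕ} (hj : j ∈ I) (hk : k ∈ I) (hjk : j < k) :
    cycI I j ≠ cycI I k := by
  have hj_max : j ≠ fmax I := (hjk.trans_le (le_fmax hk)).ne
  have hj_lt := (succI_mem_and_lt (hjk.trans_le (le_fmax hk))).2
  have hj_le := succI_le hk hjk
  unfold cycI
  rw [if_neg hj_max]
  split_ifs with hk_max
  · have := fmin_le hj
    omega
  · have := (succI_mem_and_lt (lt_of_le_of_ne (le_fmax hk) hk_max)).2
    omega

theorem cycI_injOn : Set.InjOn (cycI I) I := by
  intro j hj k hk h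
  by_contra hne
  rcases lt_or_gt_of_ne hne with hlt | hlt
  · exact cycI_ne_of_lt hj hk hlt h
  · exact cycI_ne_of_lt hk hj hlt h.symm

theorem sum_comp_cycI (hne : I.Nonempty) (f : ℕ → ℕ) : ∑ j ∈ I, f (cycI I j) = ∑ j ∈ I, f j := by
  have himage : I.image (cycI I) = I :=
    Finset.eq_of_subset_of_card_le (Finset.image_subset_iff.mpr fun j hj => cycI_mem hne hj)
      (Finset.card_image_of_injOn cycI_injOn).ge
  rw [← Finset.sum_image fun j hj k hk h => cycI_injOn hj hk h, himage]

theorem sum_cIfun (hne : I.Nonempty) {n : ℕ} (hI : I ⊆ Finset.Icc 1 n) (η : ℕ → ℕ) :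
    ∑ i ∈ Finset.Icc 1 n, cIfun I η i = ∑ i ∈ Finset.Icc 1 n, η i + 1 := by
  have h_off : ∀ i ∈ Finset.Icc 1 n \ I, cIfun I η i = η i := by
    intro i hi
    have hi_max : i ≠ fmax I := fun h => (Finset.mem_sdiff.mp hi).2 (h ▸ fmax_mem hne)
    simp only [cIfun, if_neg hi_max, if_neg (Finset.mem_sdiff.mp hi).2]
  have h_on : ∀ i ∈ I, cIfun I η i = η (cycI I i) + if i = fmax I then 1 else 0 := by
    intro i hi
    unfold cIfun cycI
    split_ifs <;> simp_all
  rw [← Finset.sum_sdiff hI, ← Finset.sum_sdiff hI (f := η), Finset.sum_congr rfl h_off,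
    Finset.sum_congr rfl h_on, Finset.sum_add_distrib, sum_comp_cycI hne,
    Finset.sum_ite_eq' I, if_pos (fmax_mem hne)]
  ring

end CyclicShift

theorem List.rel_of_mem_zip_tail {α : Type*} {R : α → α → Prop} {l : List α} (hl : l.Pairwise R)
    {a b : α} (h : (a, b) ∈ l.zip l.tail) : R a b := by
  induction l with
  | nil => simp at h
  | cons x t ih =>
    cases t with
    | nil => simp at h
    | cons y t =>
      rcases List.mem_cons.mp h with h | h
      · obtain ⟨rfl, rfl⟩ := Prod.mk.inj h
        exact List.rel_of_pairwise_cons hl List.mem_cons_self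
      · exact ih hl.of_cons h

theorem tendsto_AIR_rpow {α : ℝ} {I : Finset ℕ} {u : ℕ → ℝ} (hu : SeparatedOn I u) :
    Tendsto (fun q : ℝ => AIR q (q ^ (1 / α)) I fun i => q ^ u i) (𝓝[≠] 1) (𝓝 (AJ α I u)) := by
  have h_ends : u (fmax I) - 1 ≠ u (fmin I) := by
    by_cases h : fmin I = fmax I
    · rw [h]; linarith
    have hne : I.Nonempty := by
      by_contra h'
      simp [fmin, fmax, h'] at h
    have := (hu _ (fmin_mem hne) _ (fmax_mem hne) (lt_of_le_of_ne (fmin_le (fmax_mem hne)) h)).2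
    contrapose! this
    linarith
  have h_chain := tendsto_list_prod (f := fun p q => ahatR (q ^ (1 / α)) (q ^ u p.1) (q ^ u p.2))
    (a := fun p => aJ α (u p.1) (u p.2)) ((I.sort (· ≤ ·)).zip (I.sort (· ≤ ·)).tail) fun p hp => by
      have hlt := List.rel_of_mem_zip_tail (Finset.sortedLT_sort I).pairwise hp
      have hmem := List.of_mem_zip hp
      exact tendsto_ahatR_rpow (hu _ ((Finset.mem_sort _).mp hmem.1) _
        ((Finset.mem_sort _).mp (List.mem_of_mem_tail hmem.2)) hlt).1
  refine ((tendsto_ahatR_rpow h_ends).mul h_chain).congr' ?_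
  filter_upwards [eventually_pos_nhdsNE_one] with q hq
  rw [AIR, Real.rpow_sub hq, Real.rpow_one]

theorem tendsto_BtildeIR_rpow_div {α : ℝ} {n : ℕ} {I : Finset ℕ} {u : ℕ → ℝ}
    (hu : SeparatedOn (Finset.Icc 1 n) u) (hI : I ⊆ Finset.Icc 1 n) (hne : I.Nonempty) :
    Tendsto (fun q : ℝ => BtildeIR q (q ^ (1 / α)) n I (fun i => q ^ u i) / (q - 1)) (𝓝[≠] 1)
      (𝓝 (BtJ α n I u)) := by
  have h_first := tendsto_rpow_sub_rpow_div_sub_one (u (fmin I) + 1) ((1 - n) / α)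
  rw [show u (fmin I) + 1 - (1 - n) / α = u (fmin I) + 1 + (n - 1) / α by ring] at h_first
  have h_inner := tendsto_finsetProd
    (f := fun j q => bhatR (q ^ (1 / α)) (q ^ u (succI I j)) (q ^ u j))
    (a := fun j => bJ α (u (succI I j)) (u j))
    ((Finset.Icc 1 n).filter fun j => j ∉ I ∧ j < fmax I) fun j hj => by
      obtain ⟨hj, -, hj_max⟩ := Finset.mem_filter.mp hj
      obtain ⟨hs, hjs⟩ := succI_mem_and_lt hj_max
      exact tendsto_bhatR_rpow (hu _ hj _ (hI hs) hjs).1.symm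
  have h_tail := tendsto_finsetProd
    (f := fun j q => bhatR (q ^ (1 / α)) (q ^ (u (fmin I) + 1)) (q ^ u j))
    (a := fun j => bJ α (u (fmin I) + 1) (u j))
    ((Finset.Icc 1 n).filter fun j => fmax I < j) fun j hj => by
      obtain ⟨hj, hj_max⟩ := Finset.mem_filter.mp hj
      exact tendsto_bhatR_rpow (hu _ (hI (fmin_mem hne)) _ hj
        ((fmin_le (fmax_mem hne)).trans_lt hj_max)).2
  refine ((h_first.mul h_inner).mul h_tail).congr' ?_
  filter_upwards [eventually_pos_nhdsNE_one] with q hq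
  rw [BtildeIR, zpow_rpow_one_div hq, Real.rpow_add hq, Real.rpow_one,
    mul_comm (q ^ u (fmin I)) q]
  push_cast
  ring

theorem classical_limit_pieri_coeff_general (n : ℕ) (η : ℕ → ℕ)
    (I : Finset ℕ) (hI : I ⊆ Finset.Icc 1 n) (hne : I.Nonempty)
    (α : ℝ) (hα : 0 < α) :
    Filter.Tendsto
      (fun qr : ℝ =>
        -((qr - 1) * dprimeInvR qr (qr ^ (1/α)) n η *
            AIR qr (qr ^ (1/α)) I (specR qr (qr ^ (1/α)) n η) *
            BtildeIR qr (qr ^ (1/α)) n I (specR qr (qr ^ (1/α)) n η)) /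
          (qr ^ (η (fmin I) + 1) * (qr ^ (1/α) - 1) *
            dprimeInvR qr (qr ^ (1/α)) n (cIfun I η)))
      (nhdsWithin 1 (Set.Ioo 0 1))
      (nhds (-(α ^ 2 * dJ α n η * AJ α I (uvec α n η) * BtJ α n I (uvec α n η)) /
        dJ α n (cIfun I η))) := by
  have hu := separatedOn_uvec hα n η
  have hD := tendsto_dprimeInvR_div α hα.ne' n η
  have hDc := tendsto_dprimeInvR_div α hα.ne' n (cIfun I η)
  rw [sum_cIfun hne hI] at hDc
  have hA := tendsto_AIR_rpow (α := α) (hu.mono hI)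
  have hB := tendsto_BtildeIR_rpow_div (α := α) hu hI hne
  have hP : Tendsto (fun q : ℝ => q ^ (η (fmin I) + 1)) (𝓝[≠] 1) (𝓝 1) :=
    ((continuous_pow _).tendsto' 1 1 (one_pow _)).mono_left nhdsWithin_le_nhds
  have hT := tendsto_rpow_sub_rpow_div_sub_one (1 / α) 0
  have hDc_pos := dJ_pos hα n (cIfun I η)
  have H := ((hD.mul hA).mul hB).neg.div ((hP.mul hT).mul hDc) (by simp [hα.ne', hDc_pos.ne'])
  have hF : 𝓝[Set.Ioo 0 1] (1 : ℝ) ≤ 𝓝[≠] 1 := nhdsWithin_mono _ fun q hq => hq.2.ne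
  convert (H.mono_left hF).congr' ?_ using 2
  · field_simp
    ring
  · filter_upwards [self_mem_nhdsWithin] with q hq
    have hq1 : q - 1 ≠ 0 := sub_ne_zero.mpr hq.2.ne
    simp only [Pi.div_apply, specR_eq_rpow_uvec hq.1, Real.rpow_zero]
    field_simp
    ring

/-- classical limit of the Pieri coefficients:
with `t = q^{1/α}`, `a_{η,c_I(η)}(q) → -α² d'_{α,η} A_{α,I}(u) B̃_{α,I}(u) / d'_{α,c_I(η)}`
as `q → 1⁻` through `(0,1)`. -/
theorem classical_limit_pieri_coeff (n : ℕ) (hn : 2 ≤ n)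
    (η : ℕ → ℕ) (hη : IsComp n η)
    (I : Finset ℕ) (hI : I ⊆ Finset.Icc 1 n) (hne : I.Nonempty)
    (hmax : MaximalI n I η)
    (α : ℝ) (hα : 0 < α) :
    Filter.Tendsto
      (fun qr : ℝ =>
        -((qr - 1) * dprimeInvR qr (qr ^ (1/α)) n η *
            AIR qr (qr ^ (1/α)) I (specR qr (qr ^ (1/α)) n η) *
            BtildeIR qr (qr ^ (1/α)) n I (specR qr (qr ^ (1/α)) n η)) /
          (qr ^ (η (fmin I) + 1) * (qr ^ (1/α) - 1) *
            dprimeInvR qr (qr ^ (1/α)) n (cIfun I η)))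
      (nhdsWithin 1 (Set.Ioo 0 1))
      (nhds (-(α ^ 2 * dJ α n η * AJ α I (uvec α n η) * BtJ α n I (uvec α n η)) /
        dJ α n (cIfun I η))) :=
  classical_limit_pieri_coeff_general n η I hI hne α hα
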